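/- Let α > 0 and let β, K, a, b be real numbers with 2b − K < 0. Then sup over u ∈ ℝ of [ inf over v ∈ ℝ of ( u·a − v·b + (α/2)·(u² − β + v)² − (K/2)·u² ) ] equals −a²/(2(2b − K)) − b²/(2α) − β·b, and the outer supremum is attained at u = a/(K − 2b). -/

import Mathlib

open Set

section Quadratic

variable {γ : ℝ}

theorem neg_sq_div_le_quadratic (hγ : 0 < γ) (c t : ℝ) :
    -c ^ 2 / (2 * γ) ≤ γ / 2 * t ^ 2 - c * t := by
  have hsq : 0 ≤ (γ * t - c) ^ 2 / (2 * γ) := by positivity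
  have hid : γ / 2 * t ^ 2 - c * t - -c ^ 2 / (2 * γ) = (γ * t - c) ^ 2 / (2 * γ) := by
    field_simp
    ring
  linarith

theorem quadratic_at_vertex (hγ : γ ≠ 0) (c : ℝ) :
    γ / 2 * (c / γ) ^ 2 - c * (c / γ) = -c ^ 2 / (2 * γ) := by
  field_simp
  ring

end Quadratic

theorem sInf_range_quadratic_in_v (α β K a b u : ℝ) (hα : 0 < α) :
    sInf (range fun v : ℝ =>
        u * a - v * b + (α / 2) * (u ^ 2 - β + v) ^ 2 - (K / 2) * u ^ 2)
      = u * a + (b - K / 2) * u ^ 2 - β * b - b ^ 2 / (2 * α) := by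
  -- with `t = u² - β + v` the integrand is `α/2 t² - b t` plus a term independent of `v`
  refine IsLeast.csInf_eq ⟨⟨b / α - (u ^ 2 - β), ?_⟩, ?_⟩
  · linear_combination quadratic_at_vertex hα.ne' b
  · rintro _ ⟨v, rfl⟩
    linear_combination neg_sq_div_le_quadratic hα b (u ^ 2 - β + v)

/-- Pointwise computation of the polar functional `G*`: for `α > 0` and reals
`β, K, a, b` with `2b - K < 0`, the sup over `u` of the inf over `v` of
`u*a - v*b + (α/2)*(u² - β + v)² - (K/2)*u²` equals
`-a²/(2(2b - K)) - b²/(2α) - β*b`, the outer supremum being attained at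
`u = a/(K - 2b)`. -/
theorem stmt_1 (α β K a b : ℝ) (hα : 0 < α) (hb : 2 * b - K < 0) :
    IsGreatest
      (Set.range fun u : ℝ =>
        sInf (Set.range fun v : ℝ =>
          u * a - v * b + (α / 2) * (u ^ 2 - β + v) ^ 2 - (K / 2) * u ^ 2))
      (-a ^ 2 / (2 * (2 * b - K)) - b ^ 2 / (2 * α) - β * b) ∧
    sInf (Set.range fun v : ℝ =>
        (a / (K - 2 * b)) * a - v * b
          + (α / 2) * ((a / (K - 2 * b)) ^ 2 - β + v) ^ 2
          - (K / 2) * (a / (K - 2 * b)) ^ 2)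
      = -a ^ 2 / (2 * (2 * b - K)) - b ^ 2 / (2 * α) - β * b := by
  have hγ : 0 < K - 2 * b := by linarith
  -- after the inner infimum, the function of `u` is `-(γ/2 u² - a u) - βb - b²/(2α)`, `γ = K - 2b`
  have hmax : -a ^ 2 / (2 * (2 * b - K)) = -(-a ^ 2 / (2 * (K - 2 * b))) := by
    rw [← neg_sub K, mul_neg, div_neg]
  have hattained : sInf (range fun v : ℝ =>
        (a / (K - 2 * b)) * a - v * b
          + (α / 2) * ((a / (K - 2 * b)) ^ 2 - β + v) ^ 2
          - (K / 2) * (a / (K - 2 * b)) ^ 2)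
      = -a ^ 2 / (2 * (2 * b - K)) - b ^ 2 / (2 * α) - β * b := by
    rw [sInf_range_quadratic_in_v α β K a b _ hα, hmax]
    linear_combination -quadratic_at_vertex hγ.ne' a
  refine ⟨⟨⟨a / (K - 2 * b), hattained⟩, ?_⟩, hattained⟩
  rintro _ ⟨u, rfl⟩
  dsimp only
  rw [sInf_range_quadratic_in_v α β K a b u hα, hmax]
  linear_combination neg_sq_div_le_quadratic hγ a u
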